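/- Let a ∈ ℝ ∪ {−∞} and b ∈ ℝ with a < b. Then: (i) for c ∈ ℝ ∪ {−∞} and d ∈ ℝ with c < d, the k-vector space Hom(k_{(a,b]}, k_{(c,d]}) is one-dimensional over k if c ≤ a < d ≤ b, and is zero otherwise; (ii) for real numbers c ≤ d, the k-vector space Hom(k_{(a,b]}, k_{[c,d]}) is one-dimensional over k if a < d ≤ b, and is zero otherwise. -/

import Mathlib

open CategoryTheory TopologicalSpace Set Topology

noncomputable section

variable (k : Type) [Field k]

/-- The support of the function `s : V ∩ I → k` is closed in `V`. -/
def SuppClosedIn (I V : Set ℝ) (s : ↥(V ∩ I) → k) : Prop :=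
  ∀ x ∈ V, x ∈ closure {y : ℝ | ∃ h : y ∈ V ∩ I, s ⟨y, h⟩ ≠ 0} →
    ∃ h : x ∈ V ∩ I, s ⟨x, h⟩ ≠ 0

lemma zero_locConst (I V : Set ℝ) :
    IsLocallyConstant (0 : ↥(V ∩ I) → k) ∧ SuppClosedIn k I V 0 := by
  constructor
  · exact IsLocallyConstant.const 0
  · intro x _ hx
    exfalso
    have h0 : {y : ℝ | ∃ h : y ∈ V ∩ I, (0 : ↥(V ∩ I) → k) ⟨y, h⟩ ≠ 0} = ∅ := by
      ext y; simp
    rw [h0, closure_empty] at hx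
    exact hx

/-- The sections over `V` of the sheaf `k_I`: locally constant functions on `V ∩ I`
whose support is closed in `V`. -/
def secSub (I V : Set ℝ) : Submodule k (↥(V ∩ I) → k) where
  carrier := {s | IsLocallyConstant s ∧ SuppClosedIn k I V s}
  zero_mem' := zero_locConst k I V
  add_mem' := by
    rintro s t ⟨hslc, hscl⟩ ⟨htlc, htcl⟩
    have hlc : IsLocallyConstant (s + t) := hslc.comp₂ htlc (· + ·)
    refine ⟨hlc, ?_⟩
    intro x hxV hxcl
    have hsub : {y : ℝ | ∃ h : y ∈ V ∩ I, (s + t) ⟨y, h⟩ ≠ 0}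
        ⊆ {y : ℝ | ∃ h : y ∈ V ∩ I, s ⟨y, h⟩ ≠ 0}
          ∪ {y : ℝ | ∃ h : y ∈ V ∩ I, t ⟨y, h⟩ ≠ 0} := by
      rintro y ⟨h, hy⟩
      by_cases hsy : s ⟨y, h⟩ = 0
      · refine Or.inr ⟨h, fun h0 => hy ?_⟩
        show s ⟨y, h⟩ + t ⟨y, h⟩ = 0
        rw [hsy, h0, add_zero]
      · exact Or.inl ⟨h, hsy⟩
    have hxVI : x ∈ V ∩ I := by
      have hcl2 := closure_mono hsub hxcl
      rw [closure_union] at hcl2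
      rcases hcl2 with h | h
      · exact (hscl x hxV h).choose
      · exact (htcl x hxV h).choose
    refine ⟨hxVI, ?_⟩
    have hA : IsClosed {y : ↥(V ∩ I) | (s + t) y ≠ 0} := by
      have h1 : IsOpen ((s + t) ⁻¹' {0}) := hlc {0}
      have h2 := h1.isClosed_compl
      have h3 : ((s + t) ⁻¹' {0})ᶜ = {y : ↥(V ∩ I) | (s + t) y ≠ 0} := by
        ext y; simp
      exact h3 ▸ h2
    have hmem : (⟨x, hxVI⟩ : ↥(V ∩ I)) ∈ closure {y : ↥(V ∩ I) | (s + t) y ≠ 0} := by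
      rw [closure_subtype]
      have himg : Subtype.val '' {y : ↥(V ∩ I) | (s + t) y ≠ 0}
          = {y : ℝ | ∃ h : y ∈ V ∩ I, (s + t) ⟨y, h⟩ ≠ 0} := by
        ext y
        constructor
        · rintro ⟨z, hz, rfl⟩; exact ⟨z.2, hz⟩
        · rintro ⟨h, hy⟩; exact ⟨⟨y, h⟩, hy, rfl⟩
      rw [himg]
      exact hxcl
    have := hA.closure_eq ▸ hmem
    exact this
  smul_mem' := by
    intro c s hs
    rcases hs with ⟨hlc, hcl⟩
    by_cases hc : c = 0
    · subst hc
      rw [zero_smul]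
      exact zero_locConst k I V
    · constructor
      · exact hlc.comp (fun a => c • a)
      · intro x hxV hxcl
        have hset : {y : ℝ | ∃ h : y ∈ V ∩ I, (c • s) ⟨y, h⟩ ≠ 0}
            = {y : ℝ | ∃ h : y ∈ V ∩ I, s ⟨y, h⟩ ≠ 0} := by
          ext y
          constructor
          · rintro ⟨h, hy⟩
            refine ⟨h, fun h0 => hy ?_⟩
            show c • s ⟨y, h⟩ = 0
            rw [h0, smul_zero]
          · rintro ⟨h, hy⟩
            exact ⟨h, by simpa [smul_eq_zero, hc] using hy⟩
        rw [hset] at hxcl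
        obtain ⟨h, hy⟩ := hcl x hxV hxcl
        exact ⟨h, by simpa [smul_eq_zero, hc] using hy⟩
/-- Restriction of sections. -/
def resFun (I : Set ℝ) {V W : Set ℝ} (h : W ⊆ V) (s : ↥(V ∩ I) → k) : ↥(W ∩ I) → k :=
  fun y => s ⟨y.1, ⟨h y.2.1, y.2.2⟩⟩

lemma resFun_mem (I : Set ℝ) {V W : Set ℝ} (h : W ⊆ V) (s : ↥(V ∩ I) → k)
    (hs : s ∈ secSub k I V) : resFun k I h s ∈ secSub k I W := by
  obtain ⟨hlc, hcl⟩ := hs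
  constructor
  · exact hlc.comp_continuous (Continuous.subtype_mk continuous_subtype_val _)
  · intro x hxW hxcl
    have hsub : {y : ℝ | ∃ h' : y ∈ W ∩ I, resFun k I h s ⟨y, h'⟩ ≠ 0}
        ⊆ {y : ℝ | ∃ h' : y ∈ V ∩ I, s ⟨y, h'⟩ ≠ 0} := by
      rintro y ⟨h', hy⟩
      exact ⟨⟨h h'.1, h'.2⟩, hy⟩
    obtain ⟨hxVI, hne⟩ := hcl x (h hxW) (closure_mono hsub hxcl)
    exact ⟨⟨hxW, hxVI.2⟩, hne⟩

/-- Restriction as a linear map. -/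
def resLM (I : Set ℝ) {V W : Set ℝ} (h : W ⊆ V) : secSub k I V →ₗ[k] secSub k I W where
  toFun s := ⟨resFun k I h s.1, resFun_mem k I h s.1 s.2⟩
  map_add' s t := rfl
  map_smul' c s := rfl

/-- The presheaf `k_I` on `ℝ`. -/
def intervalPresheaf (I : Set ℝ) : TopCat.Presheaf (ModuleCat.{0} k) (TopCat.of ℝ) where
  obj V := ModuleCat.of k (secSub k I V.unop.1)
  map {V W} f := ModuleCat.ofHom (resLM k I (leOfHom f.unop))
  map_id V := rfl
  map_comp f g := rfl
theorem intervalPresheaf_isSheaf (I : Set ℝ) : (intervalPresheaf k I).IsSheaf := by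
  classical
  rw [TopCat.Presheaf.isSheaf_iff_isSheafUniqueGluing]
  intro ι U sf hcomp
  -- pointwise compatibility
  have key : ∀ (i j : ι) (x : ℝ) (hxi : x ∈ (U i).1 ∩ I) (hxj : x ∈ (U j).1 ∩ I),
      (sf i : secSub k I (U i).1).1 ⟨x, hxi⟩ = (sf j : secSub k I (U j).1).1 ⟨x, hxj⟩ := by
    intro i j x hxi hxj
    have h := hcomp i j
    have hmem : x ∈ (U i ⊓ U j).1 ∩ I := ⟨⟨hxi.1, hxj.1⟩, hxi.2⟩
    have h2 := congrFun (congrArg Subtype.val h) ⟨x, hmem⟩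
    exact h2
  have hmemS : ∀ x : ↥((iSup U : Opens (TopCat.of ℝ)).1 ∩ I), ∃ i, x.1 ∈ U i := by
    intro x
    exact Opens.mem_iSup.mp x.2.1
  set idx : ↥((iSup U : Opens (TopCat.of ℝ)).1 ∩ I) → ι := fun x => (hmemS x).choose with hidxdef
  have hidx : ∀ x, x.1 ∈ U (idx x) := fun x => (hmemS x).choose_spec
  set s₀ : ↥((iSup U : Opens (TopCat.of ℝ)).1 ∩ I) → k :=
    fun x => (sf (idx x)).1 ⟨x.1, ⟨hidx x, x.2.2⟩⟩ with hs₀def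
  have hs₀ : ∀ (x : ↥((iSup U : Opens (TopCat.of ℝ)).1 ∩ I)) (i : ι) (hx : x.1 ∈ U i),
      s₀ x = (sf i : secSub k I (U i).1).1 ⟨x.1, ⟨hx, x.2.2⟩⟩ :=
    fun x i hx => key (idx x) i x.1 ⟨hidx x, x.2.2⟩ ⟨hx, x.2.2⟩
  have hlc : IsLocallyConstant s₀ := by
    rw [IsLocallyConstant.iff_exists_open]
    intro x
    obtain ⟨i, hi⟩ := hmemS x
    have hlci : IsLocallyConstant ((sf i : secSub k I (U i).1).1 : ↥((U i).1 ∩ I) → k) := (sf i : secSub k I (U i).1).2.1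
    obtain ⟨W, hWopen, hpW, hWconst⟩ := hlci.exists_open (⟨x.1, ⟨hi, x.2.2⟩⟩ : ↥((U i).1 ∩ I))
    obtain ⟨O, hOopen, hWO⟩ := isOpen_induced_iff.mp hWopen
    subst hWO
    refine ⟨Subtype.val ⁻¹' (O ∩ (U i).1), (hOopen.inter (U i).2).preimage continuous_subtype_val,
      ⟨hpW, hi⟩, ?_⟩
    intro y hy
    have hyi : y.1 ∈ U i := hy.2
    rw [hs₀ y i hyi, hs₀ x i hi]
    exact hWconst ⟨y.1, ⟨hyi, y.2.2⟩⟩ hy.1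
  have hscl : SuppClosedIn k I (iSup U : Opens (TopCat.of ℝ)).1 s₀ := by
    intro x hxS hxcl
    obtain ⟨i, hi⟩ := Opens.mem_iSup.mp hxS
    have h1 : x ∈ closure ({y : ℝ | ∃ h : y ∈ (iSup U : Opens (TopCat.of ℝ)).1 ∩ I, s₀ ⟨y, h⟩ ≠ 0}
        ∩ (U i).1) := by
      rw [mem_closure_iff] at hxcl ⊢
      intro O hO hxO
      obtain ⟨z, hz⟩ := hxcl (O ∩ (U i).1) (hO.inter (U i).2) ⟨hxO, hi⟩
      exact ⟨z, hz.1.1, hz.2, hz.1.2⟩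
    have hsub : {y : ℝ | ∃ h : y ∈ (iSup U : Opens (TopCat.of ℝ)).1 ∩ I, s₀ ⟨y, h⟩ ≠ 0}
        ∩ (U i).1 ⊆ {y : ℝ | ∃ h : y ∈ (U i).1 ∩ I, (sf i : secSub k I (U i).1).1 ⟨y, h⟩ ≠ 0} := by
      rintro y ⟨⟨hy, hne⟩, hyi⟩
      refine ⟨⟨hyi, hy.2⟩, ?_⟩
      rw [← hs₀ ⟨y, hy⟩ i hyi]
      exact hne
    obtain ⟨hyUI, hne⟩ := (sf i : secSub k I (U i).1).2.2 x hi (closure_mono hsub h1)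
    refine ⟨⟨hxS, hyUI.2⟩, ?_⟩
    rw [hs₀ ⟨x, ⟨hxS, hyUI.2⟩⟩ i hyUI.1]
    exact hne
  refine ⟨(⟨s₀, hlc, hscl⟩ : secSub k I (iSup U : Opens (TopCat.of ℝ)).1), ?_, ?_⟩
  · intro i
    apply Subtype.ext
    funext y
    exact hs₀ ⟨y.1, ⟨leOfHom (Opens.leSupr U i) y.2.1, y.2.2⟩⟩ i y.2.1
  · intro t ht
    apply Subtype.ext
    funext x
    have h := ht (idx x)
    have h2 := congrFun (congrArg Subtype.val h) ⟨x.1, ⟨hidx x, x.2.2⟩⟩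
    exact h2

/-- The sheaf `k_I` on `ℝ` for an interval `I`: locally constant functions on `V ∩ I`
whose support is closed in `V`. -/
def intervalSheaf (I : Set ℝ) :
    Sheaf (Opens.grothendieckTopology (TopCat.of ℝ)) (ModuleCat.{0} k) :=
  ⟨intervalPresheaf k I, intervalPresheaf_isSheaf k I⟩
/-- The category of sheaves of `k`-vector spaces on `ℝ`. -/
abbrev RealSheafCat := Sheaf (Opens.grothendieckTopology (TopCat.of ℝ)) (ModuleCat.{0} k)

instance sheafHomSMul (F G : RealSheafCat k) : SMul k (F ⟶ G) :=
  ⟨fun c f => ⟨c • f.hom⟩⟩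

instance sheafHomModule (F G : RealSheafCat k) : Module k (F ⟶ G) :=
  Function.Injective.module k
    { toFun := fun f : F ⟶ G => f.hom
      map_zero' := rfl
      map_add' := fun _ _ => rfl }
    (fun _ _ h => Sheaf.hom_ext h) (fun _ _ => rfl)

instance : HasExt.{1} (RealSheafCat k) := by
  letI := HasDerivedCategory.standard (RealSheafCat k)
  exact hasExt_of_hasDerivedCategory _

/-- The interval `(a, b)` with possibly infinite endpoints. -/
def Ioo' (a b : EReal) : Set ℝ := {x : ℝ | a < (x : EReal) ∧ (x : EReal) < b}

/-- The interval `[a, b)` with a possibly infinite right endpoint. -/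
def Ico' (a : ℝ) (b : EReal) : Set ℝ := {x : ℝ | a ≤ x ∧ (x : EReal) < b}

/-- The interval `(a, b]` with a possibly infinite left endpoint. -/
def Ioc' (a : EReal) (b : ℝ) : Set ℝ := {x : ℝ | a < (x : EReal) ∧ x ≤ b}

/-- Identification of sheaves on the topological space `ℝ` with objects of `RealSheafCat`. -/
def toRS (F : TopCat.Sheaf (ModuleCat.{0} k) (TopCat.of ℝ)) : RealSheafCat k := F

/-!
Put `V = (a, ∞)`, an open set in which `(a, b]` is closed, so that `k_{(a,b]}` has a unit
section `1_V` over `V`. Every section of `k_{(a,b]}` is locally zero or a multiple of a restriction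
of `1_V`, so a morphism `φ : k_{(a,b]} ⟶ k_J` is determined by the section `φ(1_V)` of `k_J`.
That section is locally constant, hence constant on the connected set `V ∩ J`. It vanishes at
points of `J` outside the closure of `(a, b]` (this kills the case `b < d`), and it vanishes as
soon as `V ∩ J` is not closed in `V`, since its support must be (this kills the case `a < c`).
In the remaining cases evaluation of `φ(1_V)` at `d` identifies the morphisms with `k`: the
canonical morphism `k_{(a,b]} ⟶ k_J` is sent to `1`.
-/

open Opposite

section Sections

variable {k}

lemma secSub_apply_eq_of_isPreconnected {J V : Set ℝ} {s : ↥(V ∩ J) → k}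
    (hs : s ∈ secSub k J V) (hpre : IsPreconnected (V ∩ J)) (y z : ↥(V ∩ J)) : s y = s z :=
  have := Subtype.preconnectedSpace hpre
  hs.1.apply_eq_of_preconnectedSpace y z

lemma secSub_eq_zero_of_mem_closure_of_notMem {J V : Set ℝ} {s : ↥(V ∩ J) → k}
    (hs : s ∈ secSub k J V) (hpre : IsPreconnected (V ∩ J)) {x : ℝ} (hxV : x ∈ V)
    (hx : x ∈ closure (V ∩ J)) (hxJ : x ∉ J) : s = 0 := by
  funext y
  by_contra hy
  have hsupp : V ∩ J ⊆ {z : ℝ | ∃ h : z ∈ V ∩ J, s ⟨z, h⟩ ≠ 0} := fun z hz =>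
    ⟨hz, by rwa [secSub_apply_eq_of_isPreconnected hs hpre ⟨z, hz⟩ y]⟩
  exact hxJ (hs.2 x hxV (closure_mono hsupp hx)).1.2

variable (k) in
lemma one_mem_secSub {I N : Set ℝ} (hN : N ∩ closure I ⊆ I) :
    (fun _ => 1 : ↥(N ∩ I) → k) ∈ secSub k I N := by
  refine ⟨IsLocallyConstant.const 1, fun x hxN hx => ⟨⟨hxN, hN ⟨hxN, ?_⟩⟩, one_ne_zero⟩⟩
  exact closure_mono (fun y hy => hy.1.2) hx

variable (k) in
def oneSection (I N : Set ℝ) (hN : N ∩ closure I ⊆ I) : secSub k I N :=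
  ⟨fun _ => 1, one_mem_secSub k hN⟩

end Sections

section Morphisms

variable {k} {I J : Set ℝ}

lemma hom_app_apply_eq_of_le (φ : intervalSheaf k I ⟶ intervalSheaf k J)
    {M W : Opens (TopCat.of ℝ)} (hMW : M ≤ W) (s : secSub k I W) {y : ℝ} (hy : y ∈ M.1 ∩ J) :
    ((φ.hom.app (op W)).hom s).1 ⟨y, hMW hy.1, hy.2⟩ =
      ((φ.hom.app (op M)).hom (resLM k I hMW s)).1 ⟨y, hy⟩ :=
  (congrFun (congrArg Subtype.val
    (ConcreteCategory.congr_hom (φ.hom.naturality (homOfLE hMW).op) s)) ⟨y, hy⟩).symm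

lemma hom_app_apply_eq_zero_of_resLM_eq_zero (φ : intervalSheaf k I ⟶ intervalSheaf k J)
    {M W : Opens (TopCat.of ℝ)} (hMW : M ≤ W) {s : secSub k I W} (hs : resLM k I hMW s = 0)
    {y : ℝ} (hy : y ∈ M.1 ∩ J) : ((φ.hom.app (op W)).hom s).1 ⟨y, hMW hy.1, hy.2⟩ = 0 := by
  have := hom_app_apply_eq_of_le φ hMW s hy
  rw [hs] at this
  erw [map_zero] at this
  exact this

lemma exists_resLM_eq_zero_or_smul_oneSection (V W : Opens (TopCat.of ℝ)) (hIV : I ⊆ V)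
    (hV : (V : Set ℝ) ∩ closure I ⊆ I) (s : secSub k I W) {y : ℝ} (hy : y ∈ W) :
    ∃ (M : Opens (TopCat.of ℝ)) (hMW : M ≤ W), y ∈ M ∧ (resLM k I hMW s = 0 ∨
      ∃ (hMV : M ≤ V) (c : k), resLM k I hMW s = c • resLM k I hMV (oneSection k I V hV)) := by
  set S := {z : ℝ | ∃ h : z ∈ W.1 ∩ I, s.1 ⟨z, h⟩ ≠ 0}
  by_cases hyS : y ∈ closure S
  · obtain ⟨hyWI, -⟩ := s.2.2 y hy hyS
    obtain ⟨U, hU, hyU, hconst⟩ := s.2.1.exists_open (⟨y, hyWI⟩ : ↥(W.1 ∩ I))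
    obtain ⟨O, hO, rfl⟩ := isOpen_induced_iff.mp hU
    refine ⟨W ⊓ V ⊓ ⟨O, hO⟩, fun x hx => hx.1.1, ⟨⟨hy, hIV hyWI.2⟩, hyU⟩,
      Or.inr ⟨fun x hx => hx.1.2, s.1 ⟨y, hyWI⟩, ?_⟩⟩
    refine Subtype.ext (funext fun z => ?_)
    change s.1 _ = s.1 ⟨y, hyWI⟩ * 1
    rw [mul_one, hconst _ z.2.1.2]
  · refine ⟨W ⊓ ⟨(closure S)ᶜ, isClosed_closure.isOpen_compl⟩, fun x hx => hx.1, ⟨hy, hyS⟩,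
      Or.inl (Subtype.ext (funext fun z => ?_))⟩
    by_contra hz
    exact z.2.1.2 (subset_closure ⟨_, hz⟩)

theorem hom_eq_zero_of_app_oneSection_eq_zero (φ : intervalSheaf k I ⟶ intervalSheaf k J)
    (V : Opens (TopCat.of ℝ)) (hIV : I ⊆ V) (hV : (V : Set ℝ) ∩ closure I ⊆ I)
    (h : (φ.hom.app (op V)).hom (oneSection k I V hV) = 0) : φ = 0 := by
  refine Sheaf.hom_ext (NatTrans.ext (funext fun W => ModuleCat.hom_ext (LinearMap.ext
    fun s => Subtype.ext (funext fun ⟨y, hyW, hyJ⟩ => ?_))))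
  obtain ⟨M, hMW, hyM, hres | ⟨hMV, c, hres⟩⟩ :=
    exists_resLM_eq_zero_or_smul_oneSection V W.unop hIV hV s hyW
  · exact hom_app_apply_eq_zero_of_resLM_eq_zero φ hMW hres ⟨hyM, hyJ⟩
  · have hval := hom_app_apply_eq_of_le φ hMV (oneSection k I V hV) (y := y) ⟨hyM, hyJ⟩
    rw [h] at hval
    have := hom_app_apply_eq_of_le φ hMW s (y := y) ⟨hyM, hyJ⟩
    rw [hres] at this
    erw [map_smul] at this
    exact this.trans ((congrArg (c • ·) hval).symm.trans (smul_zero c))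

lemma hom_app_oneSection_apply_eq_zero_of_notMem_closure
    (φ : intervalSheaf k I ⟶ intervalSheaf k J) (V : Opens (TopCat.of ℝ))
    (hV : (V : Set ℝ) ∩ closure I ⊆ I) {z : ℝ} (hz : z ∈ V.1 ∩ J) (hzI : z ∉ closure I) :
    ((φ.hom.app (op V)).hom (oneSection k I V hV)).1 ⟨z, hz⟩ = 0 := by
  let M : Opens (TopCat.of ℝ) := V ⊓ ⟨(closure I)ᶜ, isClosed_closure.isOpen_compl⟩
  have hMV : M ≤ V := fun x hx => hx.1
  have hres : resLM k I hMV (oneSection k I V hV) = 0 :=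
    Subtype.ext (funext fun x => absurd (subset_closure x.2.2) x.2.1.2)
  exact hom_app_apply_eq_zero_of_resLM_eq_zero φ hMV hres ⟨⟨hz.1, hzI⟩, hz.2⟩

theorem hom_eq_zero_of_disjoint (φ : intervalSheaf k I ⟶ intervalSheaf k J)
    (V : Opens (TopCat.of ℝ)) (hIV : I ⊆ V) (hV : (V : Set ℝ) ∩ closure I ⊆ I)
    (hIJ : Disjoint I J) : φ = 0 :=
  hom_eq_zero_of_app_oneSection_eq_zero φ V hIV hV <| Subtype.ext <| funext fun z =>
    hom_app_oneSection_apply_eq_zero_of_notMem_closure φ V hV z.2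
      fun hzI => hIJ.notMem_of_mem_left (hV ⟨z.2.1, hzI⟩) z.2.2

theorem hom_eq_zero_of_isPreconnected_of_notMem_closure
    (φ : intervalSheaf k I ⟶ intervalSheaf k J) (V : Opens (TopCat.of ℝ)) (hIV : I ⊆ V)
    (hV : (V : Set ℝ) ∩ closure I ⊆ I) (hpre : IsPreconnected ((V : Set ℝ) ∩ J)) {z : ℝ}
    (hz : z ∈ (V : Set ℝ) ∩ J) (hzI : z ∉ closure I) : φ = 0 :=
  hom_eq_zero_of_app_oneSection_eq_zero φ V hIV hV <| Subtype.ext <| funext fun y =>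
    (secSub_apply_eq_of_isPreconnected ((φ.hom.app (op V)).hom _).2 hpre y ⟨z, hz⟩).trans
      (hom_app_oneSection_apply_eq_zero_of_notMem_closure φ V hV hz hzI)

theorem hom_eq_zero_of_isPreconnected_of_mem_closure
    (φ : intervalSheaf k I ⟶ intervalSheaf k J) (V : Opens (TopCat.of ℝ)) (hIV : I ⊆ V)
    (hV : (V : Set ℝ) ∩ closure I ⊆ I) (hpre : IsPreconnected ((V : Set ℝ) ∩ J)) {x : ℝ}
    (hxV : x ∈ V) (hx : x ∈ closure ((V : Set ℝ) ∩ J)) (hxJ : x ∉ J) : φ = 0 :=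
  hom_eq_zero_of_app_oneSection_eq_zero φ V hIV hV <| Subtype.ext <|
    secSub_eq_zero_of_mem_closure_of_notMem ((φ.hom.app (op V)).hom _).2 hpre hxV hx hxJ

end Morphisms

section Canonical

variable {k} {I J : Set ℝ}

open Classical in
def canonicalFun (I J W : Set ℝ) (s : ↥(W ∩ I) → k) : ↥(W ∩ J) → k :=
  fun y => if h : y.1 ∈ I then s ⟨y.1, y.2.1, h⟩ else 0

lemma isLocallyConstant_canonicalFun {U W : Set ℝ} (hU : IsOpen U) (hIU : I ⊆ U)
    (hUJ : U ∩ J ⊆ I) {s : ↥(W ∩ I) → k} (hs : s ∈ secSub k I W) :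
    IsLocallyConstant (canonicalFun I J W s) := by
  rw [IsLocallyConstant.iff_exists_open]
  intro y
  by_cases hyI : y.1 ∈ I
  · obtain ⟨O', hO', hyO', hconst⟩ := hs.1.exists_open ⟨y.1, y.2.1, hyI⟩
    obtain ⟨O, hO, rfl⟩ := isOpen_induced_iff.mp hO'
    refine ⟨Subtype.val ⁻¹' (O ∩ U), (hO.inter hU).preimage continuous_subtype_val,
      ⟨hyO', hIU hyI⟩, fun z hz => ?_⟩
    have hzI : z.1 ∈ I := hUJ ⟨hz.2, z.2.2⟩
    simp only [canonicalFun, dif_pos hzI, dif_pos hyI]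
    exact hconst ⟨z.1, z.2.1, hzI⟩ hz.1
  · set S := {z : ℝ | ∃ h : z ∈ W ∩ I, s ⟨z, h⟩ ≠ 0}
    have hyS : y.1 ∉ closure S := fun hy => hyI (hs.2 y.1 y.2.1 hy).1.2
    refine ⟨Subtype.val ⁻¹' (closure S)ᶜ,
      isClosed_closure.isOpen_compl.preimage continuous_subtype_val, hyS, fun z hz => ?_⟩
    simp only [canonicalFun, dif_neg hyI]
    split_ifs with hzI
    · by_contra hne
      exact hz (subset_closure ⟨⟨z.2.1, hzI⟩, hne⟩)
    · rfl

lemma suppClosedIn_canonicalFun {W : Set ℝ} (hclosed : I ∩ closure (I ∩ J) ⊆ J)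
    {s : ↥(W ∩ I) → k} (hs : s ∈ secSub k I W) : SuppClosedIn k J W (canonicalFun I J W s) := by
  intro x hxW hx
  have hsub : {z : ℝ | ∃ h : z ∈ W ∩ J, canonicalFun I J W s ⟨z, h⟩ ≠ 0} ⊆
      {z : ℝ | ∃ h : z ∈ W ∩ I, s ⟨z, h⟩ ≠ 0} ∩ (I ∩ J) := by
    rintro z ⟨hz, hne⟩
    by_cases hzI : z ∈ I
    · rw [canonicalFun, dif_pos hzI] at hne
      exact ⟨⟨⟨hz.1, hzI⟩, hne⟩, hzI, hz.2⟩
    · rw [canonicalFun, dif_neg hzI] at hne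
      exact absurd rfl hne
  have hx' := closure_mono hsub hx
  obtain ⟨hxWI, hne⟩ := hs.2 x hxW (closure_mono inter_subset_left hx')
  refine ⟨⟨hxW, hclosed ⟨hxWI.2, closure_mono inter_subset_right hx'⟩⟩, ?_⟩
  rwa [canonicalFun, dif_pos hxWI.2]

variable (k) in
/-- `U` witnesses that `I ∩ J` is open in `J`. -/
def canonicalHom {U : Set ℝ} (hU : IsOpen U) (hIU : I ⊆ U) (hUJ : U ∩ J ⊆ I)
    (hclosed : I ∩ closure (I ∩ J) ⊆ J) : intervalSheaf k I ⟶ intervalSheaf k J :=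
  ⟨{ app := fun W => ModuleCat.ofHom
      { toFun := fun s => ⟨canonicalFun I J W.unop.1 s.1,
          isLocallyConstant_canonicalFun hU hIU hUJ s.2, suppClosedIn_canonicalFun hclosed s.2⟩
        map_add' := fun s t => Subtype.ext (funext fun y => by
          by_cases h : y.1 ∈ I <;> simp [canonicalFun, h])
        map_smul' := fun c s => Subtype.ext (funext fun y => by
          by_cases h : y.1 ∈ I <;> simp [canonicalFun, h]) }
     naturality := fun _ _ _ => rfl }⟩

theorem rank_hom_eq_one (V : Opens (TopCat.of ℝ)) (hIV : I ⊆ V)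
    (hV : (V : Set ℝ) ∩ closure I ⊆ I) (hVJ : (V : Set ℝ) ∩ J ⊆ I)
    (hclosed : I ∩ closure (I ∩ J) ⊆ J) (hpre : IsPreconnected (I ∩ J)) {d : ℝ}
    (hd : d ∈ I ∩ J) : Module.rank k (intervalSheaf k I ⟶ intervalSheaf k J) = 1 := by
  have hVJ' : (V : Set ℝ) ∩ J = I ∩ J :=
    subset_antisymm (fun x hx => ⟨hVJ hx, hx.2⟩) (fun x hx => ⟨hIV hx.1, hx.2⟩)
  let ev : (intervalSheaf k I ⟶ intervalSheaf k J) →ₗ[k] k :=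
    { toFun := fun φ => ((φ.hom.app (op V)).hom (oneSection k I V hV)).1 ⟨d, hIV hd.1, hd.2⟩
      map_add' := fun _ _ => rfl
      map_smul' := fun _ _ => rfl }
  have hinj : Function.Injective ev := by
    refine (injective_iff_map_eq_zero ev).2 fun φ hφ =>
      hom_eq_zero_of_app_oneSection_eq_zero φ V hIV hV (Subtype.ext (funext fun y => ?_))
    exact (secSub_apply_eq_of_isPreconnected ((φ.hom.app (op V)).hom _).2 (hVJ' ▸ hpre) y
      _).trans hφ
  have hcanon : ev (canonicalHom k V.2 hIV hVJ hclosed) = 1 := dif_pos hd.1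
  have hsurj : Function.Surjective ev := fun c =>
    ⟨c • canonicalHom k V.2 hIV hVJ hclosed, by rw [map_smul, hcanon, smul_eq_mul, mul_one]⟩
  rw [(LinearEquiv.ofBijective ev ⟨hinj, hsurj⟩).rank_eq, Module.rank_self]

end Canonical

section Intervals

variable {k} {a : EReal} {b : ℝ}

def Ioi' (a : EReal) : Set ℝ := {x : ℝ | a < (x : EReal)}

def ioiOpens (a : EReal) : Opens (TopCat.of ℝ) :=
  ⟨Ioi' a, isOpen_Ioi.preimage continuous_coe_real_ereal⟩

instance ordConnected_Ioi' (a : EReal) : OrdConnected (Ioi' a) :=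
  ordConnected_Ioi.preimage_mono EReal.coe_strictMono.monotone

lemma Ioc'_eq_Ioi'_inter_Iic (a : EReal) (b : ℝ) : Ioc' a b = Ioi' a ∩ Iic b := rfl

instance ordConnected_Ioc' (a : EReal) (b : ℝ) : OrdConnected (Ioc' a b) := by
  rw [Ioc'_eq_Ioi'_inter_Iic]
  infer_instance

lemma closure_Ioc'_subset_Iic : closure (Ioc' a b) ⊆ Iic b :=
  closure_minimal (fun _ hx => hx.2) isClosed_Iic

lemma Ioi'_inter_closure_Ioc'_subset : Ioi' a ∩ closure (Ioc' a b) ⊆ Ioc' a b :=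
  fun _ hx => ⟨hx.1, closure_Ioc'_subset_Iic hx.2⟩

theorem rank_hom_Ioc'_eq_one {J : Set ℝ} (hJb : J ⊆ Iic b)
    (hclosed : Ioc' a b ∩ closure (Ioc' a b ∩ J) ⊆ J) [OrdConnected (Ioc' a b ∩ J)] {d : ℝ}
    (hd : d ∈ Ioc' a b ∩ J) : Module.rank k (intervalSheaf k (Ioc' a b) ⟶ intervalSheaf k J) = 1 :=
  rank_hom_eq_one (ioiOpens a) (fun _ hx => hx.1) Ioi'_inter_closure_Ioc'_subset
    (fun _ hx => ⟨hx.1, hJb hx.2⟩) hclosed (OrdConnected.isPreconnected ‹_›) hd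

theorem hom_Ioc'_eq_zero_of_lt {J : Set ℝ} [OrdConnected (Ioi' a ∩ J)]
    (φ : intervalSheaf k (Ioc' a b) ⟶ intervalSheaf k J) {d : ℝ} (had : a < d) (hd : d ∈ J)
    (hbd : b < d) : φ = 0 :=
  hom_eq_zero_of_isPreconnected_of_notMem_closure φ (ioiOpens a) (fun _ hx => hx.1)
    Ioi'_inter_closure_Ioc'_subset (OrdConnected.isPreconnected ‹_›) (z := d) ⟨had, hd⟩
    fun h => hbd.not_ge (closure_Ioc'_subset_Iic h)

theorem hom_Ioc'_eq_zero_of_le {J : Set ℝ} (φ : intervalSheaf k (Ioc' a b) ⟶ intervalSheaf k J)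
    {d : ℝ} (hJd : J ⊆ Iic d) (hda : (d : EReal) ≤ a) : φ = 0 :=
  hom_eq_zero_of_disjoint φ (ioiOpens a) (fun _ hx => hx.1)
    Ioi'_inter_closure_Ioc'_subset <| disjoint_left.2 fun _ hx hxJ =>
      (hx.1.trans_le (EReal.coe_le_coe_iff.2 (hJd hxJ))).not_ge hda

theorem hom_Ioc'_Ioc'_eq_zero_of_lt {c : EReal} {d : ℝ}
    (φ : intervalSheaf k (Ioc' a b) ⟶ intervalSheaf k (Ioc' c d)) (hac : a < c) (hcd : c < d) :
    φ = 0 := by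
  lift c to ℝ using ⟨ne_top_of_lt hcd, ne_bot_of_gt hac⟩
  have hcd' : c < d := EReal.coe_lt_coe_iff.1 hcd
  have hsub : Ioc c d ⊆ Ioi' a ∩ Ioc' c d := fun x hx =>
    ⟨hac.trans (EReal.coe_lt_coe_iff.2 hx.1), EReal.coe_lt_coe_iff.2 hx.1, hx.2⟩
  refine hom_eq_zero_of_isPreconnected_of_mem_closure φ (ioiOpens a) (fun _ hx => hx.1)
    Ioi'_inter_closure_Ioc'_subset (OrdConnected.isPreconnected (inferInstanceAs
      (Ioi' a ∩ Ioc' c d).OrdConnected)) (x := c) hac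
    (closure_mono hsub ?_) fun h => lt_irrefl _ h.1
  rw [closure_Ioc hcd'.ne]
  exact left_mem_Icc.2 hcd'.le

end Intervals

theorem hom_ioc_general (k : Type) [Field k] (a : EReal) (b : ℝ) :
    (∀ (c : EReal) (d : ℝ), c < (d : EReal) →
      ((c ≤ a ∧ a < (d : EReal) ∧ d ≤ b) →
        Module.rank k (intervalSheaf k (Ioc' a b) ⟶ intervalSheaf k (Ioc' c d)) = 1) ∧
      (¬ (c ≤ a ∧ a < (d : EReal) ∧ d ≤ b) →
        ∀ f : intervalSheaf k (Ioc' a b) ⟶ intervalSheaf k (Ioc' c d), f = 0)) ∧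
    (∀ (c d : ℝ), c ≤ d →
      ((a < (d : EReal) ∧ d ≤ b) →
        Module.rank k (intervalSheaf k (Ioc' a b) ⟶ intervalSheaf k (Set.Icc c d)) = 1) ∧
      (¬ (a < (d : EReal) ∧ d ≤ b) →
        ∀ f : intervalSheaf k (Ioc' a b) ⟶ intervalSheaf k (Set.Icc c d), f = 0)) := by
  refine ⟨fun c d hcd => ⟨?_, fun h φ => ?_⟩, fun c d hcd => ⟨?_, fun h φ => ?_⟩⟩
  · rintro ⟨hca, had, hdb⟩
    exact rank_hom_Ioc'_eq_one (fun _ hx => hx.2.trans hdb)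
      (fun _ hx => ⟨hca.trans_lt hx.1.1, closure_minimal (fun _ hy => hy.2.2) isClosed_Iic hx.2⟩)
      ⟨⟨had, hdb⟩, hcd, le_rfl⟩
  · rcases lt_or_ge a d with had | hda
    · rcases lt_or_ge b d with hbd | hdb
      · exact hom_Ioc'_eq_zero_of_lt φ had ⟨hcd, le_rfl⟩ hbd
      · exact hom_Ioc'_Ioc'_eq_zero_of_lt φ (lt_of_not_ge fun hca => h ⟨hca, had, hdb⟩) hcd
    · exact hom_Ioc'_eq_zero_of_le φ (fun _ hx => hx.2) hda
  · rintro ⟨had, hdb⟩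
    exact rank_hom_Ioc'_eq_one (fun _ hx => hx.2.trans hdb)
      (fun _ hx => closure_minimal inter_subset_right isClosed_Icc hx.2) ⟨⟨had, hdb⟩, hcd, le_rfl⟩
  · rcases lt_or_ge a d with had | hda
    · exact hom_Ioc'_eq_zero_of_lt φ had ⟨hcd, le_rfl⟩ (lt_of_not_ge fun hdb => h ⟨had, hdb⟩)
    · exact hom_Ioc'_eq_zero_of_le φ (fun _ hx => hx.2) hda

/-- For `a ∈ ℝ ∪ {−∞}` and `b ∈ ℝ` with `a < b`:
(i) for `c ∈ ℝ ∪ {−∞}` and `d ∈ ℝ` with `c < d`, the space `Hom(k_{(a,b]}, k_{(c,d]})` is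
one-dimensional over `k` if `c ≤ a < d ≤ b`, and is zero otherwise;
(ii) for real numbers `c ≤ d`, the space `Hom(k_{(a,b]}, k_{[c,d]})` is one-dimensional over `k`
if `a < d ≤ b`, and is zero otherwise. -/
theorem hom_ioc (k : Type) [Field k] (a : EReal) (b : ℝ) (hab : a < (b : EReal)) :
    (∀ (c : EReal) (d : ℝ), c < (d : EReal) →
      ((c ≤ a ∧ a < (d : EReal) ∧ d ≤ b) →
        Module.rank k (intervalSheaf k (Ioc' a b) ⟶ intervalSheaf k (Ioc' c d)) = 1) ∧
      (¬ (c ≤ a ∧ a < (d : EReal) ∧ d ≤ b) →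
        ∀ f : intervalSheaf k (Ioc' a b) ⟶ intervalSheaf k (Ioc' c d), f = 0)) ∧
    (∀ (c d : ℝ), c ≤ d →
      ((a < (d : EReal) ∧ d ≤ b) →
        Module.rank k (intervalSheaf k (Ioc' a b) ⟶ intervalSheaf k (Set.Icc c d)) = 1) ∧
      (¬ (a < (d : EReal) ∧ d ≤ b) →
        ∀ f : intervalSheaf k (Ioc' a b) ⟶ intervalSheaf k (Set.Icc c d), f = 0)) :=
  hom_ioc_general k a b
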